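/- Let n = 2^s + k with 0 ≤ k < 2^s, p ∈ (1/2,1), and i ≥ 1 with k + 2i ≤ 2^s. Then ((2k+2i)/n · p + 1 − (2k+2i)/n)·((2^s−2i)/(2^s−i) · p + 1 − (2^s−2i)/(2^s−i)) ≤ ((2k/n)p + 1 − 2k/n)·p, with equality for all p only when k + 2i = 2^s. -/
import Mathlib

theorem stmt_17 (s k i : ℕ) (hs : 1 ≤ s) (hk : k < 2 ^ s) (hi : 1 ≤ i)
    (hcap : k + 2 * i ≤ 2 ^ s) :
    let n : ℝ := 2 ^ s + k
    let g1 : ℝ → ℝ := fun p =>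
      ((2*k + 2*i)/n * p + 1 - (2*k + 2*i)/n) *
      (((2:ℝ)^s - 2*i)/((2:ℝ)^s - i) * p + 1 - ((2:ℝ)^s - 2*i)/((2:ℝ)^s - i))
    let g2 : ℝ → ℝ := fun p => ((2*k/n) * p + 1 - 2*k/n) * p
    (∀ p : ℝ, p ∈ Set.Ioo (1/2 : ℝ) 1 → g1 p ≤ g2 p) ∧
    ((∀ p : ℝ, p ∈ Set.Ioo (1/2 : ℝ) 1 → g1 p = g2 p) → k + 2 * i = 2 ^ s) := by
  intro n g1 g2
  have hcapR : (k:ℝ) + 2*i ≤ 2^s := by exact_mod_cast hcap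
  have hiR : (1:ℝ) ≤ i := by exact_mod_cast hi
  have hkR : (0:ℝ) ≤ k := Nat.cast_nonneg k
  have hiN : (i:ℝ) < 2^s := by nlinarith
  have hNi : (0:ℝ) < 2^s - i := by linarith
  have hn : (0:ℝ) < n := by positivity
  have key : ∀ p : ℝ, g2 p - g1 p =
      (i * (2^s - (k + 2*i)) * (1 - p) * (2*p - 1)) / (n * (2^s - i)) := by
    intro p
    have hn' : n ≠ 0 := ne_of_gt hn
    have hNi' : ((2:ℝ)^s - i) ≠ 0 := ne_of_gt hNi
    simp only [g1, g2]
    field_simp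
    ring
  constructor
  · intro p hp
    obtain ⟨hp1, hp2⟩ := hp
    have h1 : (0:ℝ) ≤ (i * (2^s - (k + 2*i)) * (1 - p) * (2*p - 1)) / (n * (2^s - i)) := by
      apply div_nonneg
      · have h0 : (0:ℝ) ≤ 2^s - (k + 2*i) := by linarith
        have h2 : (0:ℝ) ≤ 1 - p := by linarith
        have h3 : (0:ℝ) ≤ 2*p - 1 := by linarith
        have h4 : (0:ℝ) ≤ (i:ℝ) := by linarith
        exact mul_nonneg (mul_nonneg (mul_nonneg h4 h0) h2) h3
      · positivity
    linarith [key p]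
  · intro h
    by_contra hne
    have hlt : k + 2*i < 2^s := lt_of_le_of_ne hcap hne
    have hltR : (k:ℝ) + 2*i < 2^s := by exact_mod_cast hlt
    have h34 := h (3/4) (by constructor <;> norm_num)
    have := key (3/4)
    rw [h34, sub_self] at this
    have hpos : (0:ℝ) < (i * (2^s - (k + 2*i)) * (1 - (3/4:ℝ)) * (2*(3/4:ℝ) - 1)) / (n * (2^s - i)) := by
      apply div_pos
      · nlinarith
      · positivity
    linarith [this]
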